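/- arXiv:1912.07279 — 2 statements merged into one kernel-verified Lean document; each statement's English description precedes it below -/
import Mathlib

section
/- Let 𝒜 be an S-ring over a group G of prime order p. Suppose that p ≤ 3 or rk(𝒜) > 2. Then Aut(𝒜) is 2-isolated: every subgroup K ≤ Sym(G) that has the same orbits on G × G as Aut(𝒜) is equal to Aut(𝒜). -/
open scoped Pointwise

/-- The number of representations of `z` as `x * y` with `x ∈ X`, `y ∈ Y`
(used for the structure constants of an S-ring). -/
def structConst {G : Type*} [Group G] [DecidableEq G] (X Y : Finset G) (z : G) : ℕ :=
  ((X ×ˢ Y).filter (fun q => q.1 * q.2 = z)).card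

/-- An S-ring (Schur ring) over a finite group `G`, given by its partition into basic sets:
the partition contains `{1}`, is closed under inversion, and the products of the
characteristic sums of two blocks are integral linear combinations of characteristic sums,
i.e. the number of representations `z = x * y` (`x ∈ X`, `y ∈ Y`) is constant for `z`
ranging over a block `Z`. -/
structure SRing (G : Type*) [Group G] [Fintype G] [DecidableEq G] where
  basicSets : Finset (Finset G)
  nonempty_mem : ∀ X ∈ basicSets, X.Nonempty
  exists_mem : ∀ g : G, ∃ X ∈ basicSets, g ∈ X
  disj : ∀ X ∈ basicSets, ∀ Y ∈ basicSets, X ≠ Y → Disjoint X Y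
  one_mem : ({1} : Finset G) ∈ basicSets
  inv_mem : ∀ X ∈ basicSets, X.image (fun x => x⁻¹) ∈ basicSets
  structConst_eq : ∀ X ∈ basicSets, ∀ Y ∈ basicSets, ∀ Z ∈ basicSets,
    ∀ z ∈ Z, ∀ z' ∈ Z, structConst X Y z = structConst X Y z'

namespace SRing

variable {G G' : Type*} [Group G] [Fintype G] [DecidableEq G]
  [Group G'] [Fintype G'] [DecidableEq G']

/-- An algebraic isomorphism between S-rings: a bijection between the sets of basic sets
preserving the structure constants. -/
def IsAlgIso (A : SRing G) (B : SRing G') (φ : Finset G → Finset G') : Prop :=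
  Set.BijOn φ (A.basicSets : Set (Finset G)) (B.basicSets : Set (Finset G')) ∧
  ∀ X ∈ A.basicSets, ∀ Y ∈ A.basicSets, ∀ Z ∈ A.basicSets,
    ∀ z ∈ Z, ∀ z' ∈ φ Z, structConst X Y z = structConst (φ X) (φ Y) z'

/-- `φ` is induced by the bijection `f : G → G'` if `R(X)^f = R(X^φ)` for every basic set `X`,
where `R(X) = {(g, xg) : x ∈ X, g ∈ G}`; equivalently (for bijective `f`),
`h * g⁻¹ ∈ X ↔ f h * (f g)⁻¹ ∈ φ X` for all `g h`. -/
def Induces (A : SRing G) (B : SRing G') (φ : Finset G → Finset G') (f : G → G') : Prop :=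
  Function.Bijective f ∧
  ∀ X ∈ A.basicSets, ∀ g h : G, h * g⁻¹ ∈ X ↔ f h * (f g)⁻¹ ∈ φ X

/-- Separability with respect to the class of all finite abelian groups. -/
def SeparableA (A : SRing G) : Prop :=
  ∀ (H : Type) [CommGroup H] [Fintype H] [DecidableEq H],
    ∀ (B : SRing H) (φ : Finset G → Finset H),
      A.IsAlgIso B φ → ∃ f : G → H, A.Induces B φ f

/-- `X` is an `A`-set: a union of basic sets of `A`. -/
def IsASet (A : SRing G) (X : Finset G) : Prop :=
  ∀ Y ∈ A.basicSets, (Y ∩ X).Nonempty → Y ⊆ X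

end SRing
namespace SRing

variable {G : Type*} [Group G] [Fintype G] [DecidableEq G]

/-- The automorphism group of an S-ring: all permutations `f` of `G` with
`R(X)^f = R(X)` for every basic set `X`. -/
def autPerm (A : SRing G) : Subgroup (Equiv.Perm G) where
  carrier := {f | ∀ X ∈ A.basicSets, ∀ g h : G, h * g⁻¹ ∈ X ↔ f h * (f g)⁻¹ ∈ X}
  one_mem' := by intro X hX g h; simp
  mul_mem' := by
    intro a b ha hb X hX g h
    rw [Equiv.Perm.mul_apply, Equiv.Perm.mul_apply]
    exact (hb X hX g h).trans (ha X hX (b g) (b h))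
  inv_mem' := by
    intro f hf X hX g h
    have h2 := hf X hX (f⁻¹ g) (f⁻¹ h)
    simp only [Equiv.Perm.coe_inv, Equiv.apply_symm_apply] at h2
    exact h2.symm

end SRing

/-- The group of right translations `x ↦ x * h` inside `Sym(G)`. -/
def rightTranslations (G : Type*) [Group G] : Subgroup (Equiv.Perm G) where
  carrier := {f | ∃ h : G, ∀ x : G, f x = x * h}
  one_mem' := ⟨1, by simp⟩
  mul_mem' := by
    rintro a b ⟨h1, ha⟩ ⟨h2, hb⟩
    exact ⟨h2 * h1, fun x => by rw [Equiv.Perm.mul_apply, hb, ha, mul_assoc]⟩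
  inv_mem' := by
    rintro f ⟨h, hf⟩
    refine ⟨h⁻¹, fun x => ?_⟩
    have : f (x * h⁻¹) = x := by rw [hf, inv_mul_cancel_right]
    calc f⁻¹ x = f⁻¹ (f (x * h⁻¹)) := by rw [this]
    _ = x * h⁻¹ := by simp

/-- For `Δ` a set of permutations of `U` and `N ⊴ U`, the induced set `Δ^S` of permutations of
the section `S = U/N`, consisting of the maps induced by those elements of `Δ` that permute
the `N`-cosets. -/
def sectionAut {U : Type*} [Group U] (N : Subgroup U) [N.Normal]
    (Δ : Set (Equiv.Perm U)) : Set (Equiv.Perm (U ⧸ N)) :=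
  {σ | ∃ f ∈ Δ,
    (∀ u v : U, (QuotientGroup.mk u : U ⧸ N) = QuotientGroup.mk v →
      (QuotientGroup.mk (f u) : U ⧸ N) = QuotientGroup.mk (f v)) ∧
    ∀ u : U, σ (QuotientGroup.mk u) = QuotientGroup.mk (f u)}

/-!
Each `R(X)` is a union of 2-orbits of `Aut(𝒜)`, so a 2-equivalent `K` lies in `Aut(𝒜)`; as `K`
also moves a pair `(u, v)` wherever `Aut(𝒜)` does, `K = Aut(𝒜)` as soon as only the identity of
`Aut(𝒜)` fixes two points. For `p ≤ 3` this is clear. Otherwise Schur's multiplier theorem (in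
characteristic `q`, `S̲ ^ q` is the sum over `{s ^ q | s ∈ S}`, and the elements of `𝔽_q[G]` that
are constant on basic sets form a subalgebra) makes the nontrivial basic sets cosets of a single
subgroup of `(ℤ/p)ˣ`, of some order `h` with `2h ≤ p - 1` since there are at least two of them.
Read on `ℤ/p`, an automorphism `F` then satisfies `(F y - F z) ^ h = (y - z) ^ h`. Via power sums
the functions `(x - ·) ^ h` span all polynomial functions of degree `≤ h`, so by dimension these
are exactly the span of `1, F, …, F ^ h`. Thus `F` and its powers up to `h` are polynomials of
degree `≤ h`, which forces `F` to be affine, and an affine map fixing two points is the identity.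
-/

open Finset

theorem Subgroup.eq_of_le_of_exists_agree_on_pair {Ω : Type*} {K H : Subgroup (Equiv.Perm Ω)}
    (hKH : K ≤ H) {u v : Ω} (hagree : ∀ f ∈ H, ∃ k ∈ K, k u = f u ∧ k v = f v)
    (hfix : ∀ f ∈ H, f u = u → f v = v → f = 1) : K = H := by
  refine le_antisymm hKH fun f hf => ?_
  obtain ⟨k, hk, hku, hkv⟩ := hagree f hf
  have hkf : k⁻¹ * f = 1 :=
    hfix _ (mul_mem (inv_mem (hKH hk)) hf) (by simp [← hku]) (by simp [← hkv])
  rwa [← inv_mul_eq_one.mp hkf]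

theorem Equiv.Perm.eq_one_of_fixes_pair_of_card_le_three {Ω : Type*} [Fintype Ω]
    (hΩ : Fintype.card Ω ≤ 3) {f : Equiv.Perm Ω} {u v : Ω} (huv : u ≠ v)
    (hu : f u = u) (hv : f v = v) : f = 1 := by
  classical
  ext x
  rw [Equiv.Perm.one_apply]
  by_contra hx
  have hxu : x ≠ u := by rintro rfl; exact hx hu
  have hxv : x ≠ v := by rintro rfl; exact hx hv
  have hfxu : f x ≠ u := fun h => hxu (f.injective (h.trans hu.symm))
  have hfxv : f x ≠ v := fun h => hxv (f.injective (h.trans hv.symm))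
  have : #({u, v, x, f x} : Finset Ω) ≤ 3 := (card_le_univ _).trans hΩ
  rw [card_insert_of_notMem (by simp [huv, hxu.symm, hfxu.symm]),
    card_insert_of_notMem (by simp [hxv.symm, hfxv.symm]),
    card_pair (Ne.symm hx)] at this
  omega

namespace SRing

variable {G : Type*} [Group G] [Fintype G] [DecidableEq G] (A : SRing G)

theorem eq_of_mem_of_mem {X Y : Finset G} (hX : X ∈ A.basicSets) (hY : Y ∈ A.basicSets)
    {g : G} (hgX : g ∈ X) (hgY : g ∈ Y) : X = Y := by
  by_contra hne
  exact disjoint_left.mp (A.disj X hX Y hY hne) hgX hgY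

theorem eq_singleton_one_of_one_mem {X : Finset G} (hX : X ∈ A.basicSets) (h1 : (1 : G) ∈ X) :
    X = {1} :=
  A.eq_of_mem_of_mem hX A.one_mem h1 (mem_singleton_self 1)

theorem isASet_of_mem {X : Finset G} (hX : X ∈ A.basicSets) : A.IsASet X := by
  rintro Y hY ⟨g, hg⟩
  rw [A.eq_of_mem_of_mem hY hX (mem_inter.mp hg).1 (mem_inter.mp hg).2]

theorem mem_autPerm {f : Equiv.Perm G} :
    f ∈ A.autPerm ↔ ∀ X ∈ A.basicSets, ∀ g h : G, h * g⁻¹ ∈ X ↔ f h * (f g)⁻¹ ∈ X :=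
  Iff.rfl

theorem le_autPerm_of_forall_exists {K : Subgroup (Equiv.Perm G)}
    (hK : ∀ k ∈ K, ∀ g h : G, ∃ f ∈ A.autPerm, f g = k g ∧ f h = k h) : K ≤ A.autPerm := by
  intro k hk
  refine A.mem_autPerm.mpr fun X hX g h => ?_
  obtain ⟨f, hf, hfg, hfh⟩ := hK k hk g h
  rw [← hfg, ← hfh]
  exact A.mem_autPerm.mp hf X hX g h

theorem ne_one_of_mem {X : Finset G} (hX : X ∈ A.basicSets) (hX1 : X ≠ {1}) {x : G}
    (hx : x ∈ X) : x ≠ 1 :=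
  fun h => hX1 (A.eq_singleton_one_of_one_mem hX (h ▸ hx))

theorem card_add_card_le {X Y : Finset G} (hX : X ∈ A.basicSets) (hY : Y ∈ A.basicSets)
    (hXY : X ≠ Y) (hX1 : X ≠ {1}) (hY1 : Y ≠ {1}) : #X + #Y ≤ Fintype.card G - 1 := by
  have hsub : X ∪ Y ⊆ univ.erase 1 := by
    intro x hx
    rcases mem_union.mp hx with hx | hx
    · exact mem_erase.mpr ⟨A.ne_one_of_mem hX hX1 hx, mem_univ x⟩
    · exact mem_erase.mpr ⟨A.ne_one_of_mem hY hY1 hx, mem_univ x⟩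
  have := card_le_card hsub
  rwa [card_union_of_disjoint (A.disj X hX Y hY hXY), card_erase_of_mem (mem_univ _),
    card_univ] at this

theorem exists_ne_of_two_lt_card (hrk : 2 < #A.basicSets) :
    ∃ X ∈ A.basicSets, ∃ Y ∈ A.basicSets, X ≠ Y ∧ X ≠ {1} ∧ Y ≠ {1} := by
  have : 1 < #(A.basicSets.erase {1}) := by
    rw [card_erase_of_mem A.one_mem]
    omega
  obtain ⟨X, hX, Y, hY, hXY⟩ := one_lt_card.mp this
  exact ⟨X, mem_of_mem_erase hX, Y, mem_of_mem_erase hY, hXY, ne_of_mem_erase hX,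
    ne_of_mem_erase hY⟩

end SRing

noncomputable section GroupAlgebra

variable {G : Type*} (R : Type*) [CommSemiring R]

-- the paper's `X̲`, as an element of `R[G]`
def ofFinset (X : Finset G) : MonoidAlgebra R G := ∑ x ∈ X, MonoidAlgebra.single x 1

variable {R} [DecidableEq G]

theorem coeff_ofFinset (X : Finset G) (g : G) :
    (ofFinset R X).coeff g = if g ∈ X then 1 else 0 := by
  simp [ofFinset, MonoidAlgebra.coeff_sum, Finsupp.finsetSum_apply, MonoidAlgebra.coeff_single,
    Finsupp.single_apply]

theorem coeff_ofFinset_mul_ofFinset [Group G] (X Y : Finset G) (z : G) :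
    (ofFinset R X * ofFinset R Y).coeff z = structConst X Y z := by
  simp only [ofFinset, sum_mul_sum, MonoidAlgebra.single_mul_single, one_mul,
    MonoidAlgebra.coeff_sum, Finsupp.finsetSum_apply, MonoidAlgebra.coeff_single,
    Finsupp.single_apply, structConst, card_filter, Nat.cast_sum, sum_product]
  push_cast
  rfl

end GroupAlgebra

theorem ofFinset_pow_char {G : Type*} [CommGroup G] [DecidableEq G] {R : Type*} [CommRing R]
    (q : ℕ) [Fact q.Prime] [CharP R q]
    {S : Finset G} (hinj : Set.InjOn (· ^ q) (S : Set G)) :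
    ofFinset R S ^ q = ofFinset R (S.image (· ^ q)) := by
  have : CharP (MonoidAlgebra R G) q := charP_of_injective_algebraMap' R q
  rw [ofFinset, sum_pow_char, ofFinset, Finset.sum_image hinj]
  simp [MonoidAlgebra.single_pow]

namespace SRing

variable {G : Type*} [Group G] [Fintype G] [DecidableEq G] (A : SRing G)
variable (R : Type*) [CommSemiring R]

-- `R ⊗ 𝒜`; by `mem_submodule_iff_mem_span` it is the `R`-span of the `X̲`
noncomputable def submodule : Submodule R (MonoidAlgebra R G) where
  carrier := {w | ∀ X ∈ A.basicSets, ∀ x ∈ X, ∀ y ∈ X, w.coeff x = w.coeff y}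
  add_mem' hv hw X hX x hx y hy := by
    simp only [MonoidAlgebra.coeff_add, Finsupp.add_apply, hv X hX x hx y hy, hw X hX x hx y hy]
  zero_mem' := by simp
  smul_mem' c w hw X hX x hx y hy := by
    simp only [MonoidAlgebra.coeff_smul, Finsupp.smul_apply, hw X hX x hx y hy]

variable {A R}

theorem ofFinset_mem_submodule_iff [Nontrivial R] {S : Finset G} :
    ofFinset R S ∈ A.submodule R ↔ A.IsASet S := by
  constructor
  · rintro hS X hX ⟨x, hx⟩ y hy
    have := hS X hX x (mem_inter.mp hx).1 y hy
    rw [coeff_ofFinset, coeff_ofFinset, if_pos (mem_inter.mp hx).2] at this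
    by_contra hyS
    rw [if_neg hyS] at this
    exact one_ne_zero this
  · intro hS X hX x hx y hy
    have key : ∀ z ∈ X, z ∈ S ↔ X ⊆ S := fun z hz =>
      ⟨fun hzS => hS X hX ⟨z, mem_inter.mpr ⟨hz, hzS⟩⟩, fun hXS => hXS hz⟩
    simp only [coeff_ofFinset, key x hx, key y hy]

theorem ofFinset_mem_submodule {X : Finset G} (hX : X ∈ A.basicSets) :
    ofFinset R X ∈ A.submodule R := by
  intro Y hY x hx y hy
  have key : ∀ z ∈ Y, z ∈ X ↔ Y = X := fun z hz =>
    ⟨A.eq_of_mem_of_mem hY hX hz, fun h => h ▸ hz⟩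
  simp only [coeff_ofFinset, key x hx, key y hy]

theorem ofFinset_mul_ofFinset_mem_submodule {X Y : Finset G} (hX : X ∈ A.basicSets)
    (hY : Y ∈ A.basicSets) : ofFinset R X * ofFinset R Y ∈ A.submodule R := by
  intro Z hZ z hz z' hz'
  rw [coeff_ofFinset_mul_ofFinset, coeff_ofFinset_mul_ofFinset,
    A.structConst_eq X hX Y hY Z hZ z hz z' hz']

theorem mem_submodule_iff_mem_span {w : MonoidAlgebra R G} :
    w ∈ A.submodule R ↔ w ∈ Submodule.span R (ofFinset R '' A.basicSets) := by
  constructor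
  · intro hw
    choose! r hr using A.nonempty_mem
    have hsum : w = ∑ X ∈ A.basicSets, w.coeff (r X) • ofFinset R X := by
      ext g
      obtain ⟨Y, hY, hgY⟩ := A.exists_mem g
      rw [MonoidAlgebra.coeff_sum, Finsupp.finsetSum_apply, sum_eq_single Y]
      · simp [coeff_ofFinset, hgY, hw Y hY (r Y) (hr Y hY) g hgY]
      · intro X hX hXY
        have hgX : g ∉ X := fun h => hXY (A.eq_of_mem_of_mem hX hY h hgY)
        simp [coeff_ofFinset, hgX]
      · exact fun h => absurd hY h
    rw [hsum]
    exact Submodule.sum_mem _ fun X hX =>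
      Submodule.smul_mem _ _ (Submodule.subset_span (Set.mem_image_of_mem _ hX))
  · intro hw
    refine Submodule.span_le.mpr ?_ hw
    rintro _ ⟨X, hX, rfl⟩
    exact ofFinset_mem_submodule hX

theorem mul_mem_submodule {v w : MonoidAlgebra R G} (hv : v ∈ A.submodule R)
    (hw : w ∈ A.submodule R) : v * w ∈ A.submodule R := by
  rw [mem_submodule_iff_mem_span] at hv hw ⊢
  have hvw := Submodule.mul_mem_mul hv hw
  rw [Submodule.span_mul_span] at hvw
  refine Submodule.span_le.mpr ?_ hvw
  rintro _ ⟨_, ⟨X, hX, rfl⟩, _, ⟨Y, hY, rfl⟩, rfl⟩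
  exact mem_submodule_iff_mem_span.mp (ofFinset_mul_ofFinset_mem_submodule hX hY)

variable (A R) in
noncomputable def subalgebra : Subalgebra R (MonoidAlgebra R G) :=
  (A.submodule R).toSubalgebra
    (by simpa [ofFinset, MonoidAlgebra.one_def] using ofFinset_mem_submodule (R := R) A.one_mem)
    fun _ _ => mul_mem_submodule

theorem mem_subalgebra {w : MonoidAlgebra R G} : w ∈ A.subalgebra R ↔ w ∈ A.submodule R :=
  Iff.rfl

end SRing

theorem pow_injective_of_coprime_card {G : Type*} [Group G] [Fintype G] {n : ℕ}
    (hn : n.Coprime (Fintype.card G)) : Function.Injective (· ^ n : G → G) :=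
  (Nat.Coprime.pow_left_bijective (by rwa [Nat.card_eq_fintype_card, Nat.coprime_comm])).1

namespace SRing

variable {G : Type*} [CommGroup G] [Fintype G] [DecidableEq G] (A : SRing G)

theorem isASet_image_pow_of_prime {q : ℕ} (hq : q.Prime) (hqG : q.Coprime (Fintype.card G))
    {S : Finset G} (hS : A.IsASet S) : A.IsASet (S.image (· ^ q)) := by
  have := Fact.mk hq
  rw [← ofFinset_mem_submodule_iff (R := ZMod q),
    ← ofFinset_pow_char q (pow_injective_of_coprime_card hqG).injOn,
    ← mem_subalgebra]
  exact pow_mem (mem_subalgebra.mpr (ofFinset_mem_submodule_iff.mpr hS)) q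

theorem isASet_image_pow {n : ℕ} (hn : n.Coprime (Fintype.card G)) {S : Finset G}
    (hS : A.IsASet S) : A.IsASet (S.image (· ^ n)) := by
  induction n using Nat.recOnMul generalizing S with
  | zero =>
    have : Subsingleton G :=
      Fintype.card_le_one_iff_subsingleton.mp ((Nat.coprime_zero_left _).mp hn).le
    rintro Y - ⟨t, ht⟩ y -
    rw [Subsingleton.elim y t]
    exact (mem_inter.mp ht).2
  | one => simpa using hS
  | prime q hq => exact A.isASet_image_pow_of_prime hq hn hS
  | mul a b iha ihb =>
    rw [Nat.coprime_mul_iff_left] at hn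
    have := ihb hn.2 (iha hn.1 hS)
    rwa [Finset.image_image, Function.comp_def, ← funext fun x : G => pow_mul x a b] at this

theorem subset_image_pow {n : ℕ} (hn : n.Coprime (Fintype.card G)) {X Y : Finset G}
    (hX : X ∈ A.basicSets) (hY : Y ∈ A.basicSets) {x : G} (hx : x ∈ X) (hxY : x ^ n ∈ Y) :
    Y ⊆ X.image (· ^ n) :=
  A.isASet_image_pow hn (A.isASet_of_mem hX) Y hY
    ⟨x ^ n, mem_inter.mpr ⟨hxY, mem_image_of_mem _ hx⟩⟩

theorem card_le_card_of_pow_mem {n : ℕ} (hn : n.Coprime (Fintype.card G)) {X Y : Finset G}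
    (hX : X ∈ A.basicSets) (hY : Y ∈ A.basicSets) {x : G} (hx : x ∈ X) (hxY : x ^ n ∈ Y) :
    #Y ≤ #X :=
  (card_le_card (A.subset_image_pow hn hX hY hx hxY)).trans
    (card_image_of_injective X (pow_injective_of_coprime_card hn)).le

theorem image_pow_eq_self {n : ℕ} (hn : n.Coprime (Fintype.card G)) {X : Finset G}
    (hX : X ∈ A.basicSets) {x : G} (hx : x ∈ X) (hxX : x ^ n ∈ X) : X.image (· ^ n) = X :=
  (eq_of_subset_of_card_le (A.subset_image_pow hn hX hX hx hxX)
    (card_image_of_injective X (pow_injective_of_coprime_card hn)).le).symm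

end SRing

theorem Finset.pow_card_eq_pow_card_of_div_mul_mem {K : Type*} [Field K] [DecidableEq K]
    {T : Finset K} (hT0 : (0 : K) ∉ T) (hT : ∀ a ∈ T, ∀ b ∈ T, ∀ c ∈ T, b / a * c ∈ T)
    {a b : K} (ha : a ∈ T) (hb : b ∈ T) : a ^ #T = b ^ #T := by
  have hne : ∀ c ∈ T, c ≠ 0 := fun c hc h => hT0 (h ▸ hc)
  -- the stabilizer `M` of `T` in `Kˣ` acts simply transitively on `T`, so `(b / a) ^ #T = 1`
  let M := MulAction.stabilizer Kˣ T
  have hmem : ∀ (d : K) (hd : d ∈ T),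
      Units.mk0 (d / a) (div_ne_zero (hne d hd) (hne a ha)) ∈ M := by
    intro d hd
    refine eq_of_subset_of_card_le ?_ (card_smul_finset _ T).ge
    intro x hx
    obtain ⟨c, hc, rfl⟩ := mem_smul_finset.mp hx
    exact hT a ha d hd c hc
  have hcard : Nat.card M = #T := by
    rw [← Nat.card_eq_finsetCard]
    refine Nat.card_eq_of_bijective (fun m : M => (⟨(m : Kˣ) • a, ?_⟩ : T)) ⟨?_, ?_⟩
    · rw [← m.2]
      exact smul_mem_smul_finset ha
    · intro m m' hmm'
      have := congrArg Subtype.val hmm'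
      exact Subtype.ext (Units.ext (mul_right_cancel₀ (hne a ha) this))
    · rintro ⟨d, hd⟩
      exact ⟨⟨_, hmem d hd⟩, Subtype.ext (div_mul_cancel₀ d (hne a ha))⟩
  have hpow : (b / a) ^ #T = 1 := by
    have := congrArg (fun m : M => ((m : Kˣ) : K)) (pow_card_eq_one' (x := ⟨_, hmem b hb⟩))
    simpa [hcard] using this
  rw [div_pow, div_eq_one_iff_eq (pow_ne_zero _ (hne a ha))] at hpow
  exact hpow.symm

section PrimeOrder

open Multiplicative

variable {G : Type*} [CommGroup G] {p : ℕ}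

theorem MulEquiv.card_eq_of_zmod [Fintype G] [NeZero p] (e : Multiplicative (ZMod p) ≃* G) :
    Fintype.card G = p := by
  rw [← Fintype.card_congr e.toEquiv, Fintype.card_multiplicative, ZMod.card]

theorem MulEquiv.exists_ofAdd_eq (e : Multiplicative (ZMod p) ≃* G) (x : G) :
    ∃ a : ZMod p, e (ofAdd a) = x :=
  ⟨toAdd (e.symm x), by simp⟩

theorem MulEquiv.map_ofAdd_eq_one_iff (e : Multiplicative (ZMod p) ≃* G) {a : ZMod p} :
    e (ofAdd a) = 1 ↔ a = 0 := by
  rw [map_eq_one_iff e e.injective, ofAdd_eq_one]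

theorem MulEquiv.map_ofAdd_mul [NeZero p] (e : Multiplicative (ZMod p) ≃* G) (m a : ZMod p) :
    e (ofAdd (m * a)) = e (ofAdd a) ^ m.val := by
  rw [← map_pow, ← ofAdd_nsmul, nsmul_eq_mul, ZMod.natCast_zmod_val]

theorem ZMod.val_coprime_of_ne_zero [Fact p.Prime] {m : ZMod p} (hm : m ≠ 0) :
    m.val.Coprime p :=
  ZMod.val_coe_unit_coprime (Units.mk0 m hm)

theorem MulEquiv.exists_coprime_pow_eq [Fintype G] [Fact p.Prime]
    (e : Multiplicative (ZMod p) ≃* G) {x y : G} (hx : x ≠ 1) (hy : y ≠ 1) :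
    ∃ n : ℕ, n.Coprime (Fintype.card G) ∧ x ^ n = y := by
  obtain ⟨a, rfl⟩ := e.exists_ofAdd_eq x
  obtain ⟨b, rfl⟩ := e.exists_ofAdd_eq y
  rw [Ne, e.map_ofAdd_eq_one_iff] at hx hy
  refine ⟨(b / a).val, ?_, ?_⟩
  · rw [e.card_eq_of_zmod]
    exact ZMod.val_coprime_of_ne_zero (div_ne_zero hy hx)
  · rw [← e.map_ofAdd_mul, div_mul_cancel₀ b hx]

end PrimeOrder

namespace SRing

open Multiplicative

variable {G : Type*} [CommGroup G] [Fintype G] [DecidableEq G] {p : ℕ} [Fact p.Prime]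
  (A : SRing G)

theorem card_eq_card_of_ne_one (e : Multiplicative (ZMod p) ≃* G) {X Y : Finset G}
    (hX : X ∈ A.basicSets) (hY : Y ∈ A.basicSets) (hX1 : X ≠ {1}) (hY1 : Y ≠ {1}) :
    #X = #Y := by
  obtain ⟨x, hx⟩ := A.nonempty_mem X hX
  obtain ⟨y, hy⟩ := A.nonempty_mem Y hY
  have hx1 := A.ne_one_of_mem hX hX1 hx
  have hy1 := A.ne_one_of_mem hY hY1 hy
  obtain ⟨n, hn, hxy⟩ := e.exists_coprime_pow_eq hx1 hy1
  obtain ⟨m, hm, hyx⟩ := e.exists_coprime_pow_eq hy1 hx1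
  exact le_antisymm (A.card_le_card_of_pow_mem hm hY hX hy (hyx ▸ hx))
    (A.card_le_card_of_pow_mem hn hX hY hx (hxy ▸ hy))

theorem pow_card_eq_pow_card (e : Multiplicative (ZMod p) ≃* G) {X : Finset G}
    (hX : X ∈ A.basicSets) (hX1 : X ≠ {1}) {a b : ZMod p} (ha : e (ofAdd a) ∈ X)
    (hb : e (ofAdd b) ∈ X) : a ^ #X = b ^ #X := by
  let T := X.map (e.symm.toEquiv.trans toAdd).toEmbedding
  have hmemT : ∀ c, c ∈ T ↔ e (ofAdd c) ∈ X := fun c => mem_map_equiv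
  have hne : ∀ c ∈ T, c ≠ 0 := fun c hc =>
    mt e.map_ofAdd_eq_one_iff.mpr (A.ne_one_of_mem hX hX1 ((hmemT c).mp hc))
  have hT : ∀ a ∈ T, ∀ b ∈ T, ∀ c ∈ T, b / a * c ∈ T := by
    intro a ha b hb c hc
    have hn : (b / a).val.Coprime (Fintype.card G) := by
      rw [e.card_eq_of_zmod]
      exact ZMod.val_coprime_of_ne_zero (div_ne_zero (hne b hb) (hne a ha))
    rw [hmemT] at ha hb hc ⊢
    have hXn : X.image (· ^ (b / a).val) = X := by
      refine A.image_pow_eq_self hn hX ha ?_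
      rwa [← e.map_ofAdd_mul, div_mul_cancel₀ b (hne a ((hmemT a).mpr ha))]
    rw [e.map_ofAdd_mul, ← hXn]
    exact mem_image_of_mem _ hc
  have := pow_card_eq_pow_card_of_div_mul_mem (fun h => hne 0 h rfl) hT
    ((hmemT a).mpr ha) ((hmemT b).mpr hb)
  rwa [card_map] at this

theorem exists_pow_eq_pow_of_two_lt_card (e : Multiplicative (ZMod p) ≃* G)
    (hrk : 2 < #A.basicSets) :
    ∃ h : ℕ, 1 ≤ h ∧ 2 * h ≤ p - 1 ∧ ∀ X ∈ A.basicSets, ∀ a b : ZMod p,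
      e (ofAdd a) ∈ X → e (ofAdd b) ∈ X → a ^ h = b ^ h := by
  obtain ⟨X₁, hX₁, X₂, hX₂, hX₁₂, hX₁1, hX₂1⟩ := A.exists_ne_of_two_lt_card hrk
  refine ⟨#X₁, card_pos.mpr (A.nonempty_mem X₁ hX₁), ?_, fun X hX a b ha hb => ?_⟩
  · have := A.card_add_card_le hX₁ hX₂ hX₁₂ hX₁1 hX₂1
    rw [← A.card_eq_card_of_ne_one e hX₁ hX₂ hX₁1 hX₂1, e.card_eq_of_zmod] at this
    omega
  · by_cases hX1 : X = {1}
    · subst hX1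
      rw [mem_singleton, e.map_ofAdd_eq_one_iff] at ha hb
      rw [ha, hb]
    · rw [A.card_eq_card_of_ne_one e hX₁ hX hX₁1 hX1]
      exact A.pow_card_eq_pow_card e hX hX1 ha hb

end SRing

section FiniteField

open Polynomial

variable {K : Type*} [Field K] [Fintype K]

theorem FiniteField.sum_pow_of_lt_two_mul [DecidableEq K] {m : ℕ} (hm0 : 0 < m)
    (hm : m < 2 * (Fintype.card K - 1)) :
    ∑ x : K, x ^ m = if m = Fintype.card K - 1 then -1 else 0 := by
  rw [Fintype.sum_eq_add_sum_subtype_ne _ 0, zero_pow hm0.ne', zero_add,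
    ← Fintype.sum_equiv unitsEquivNeZero (fun u : Kˣ => (u : K) ^ m) _ fun _ => rfl,
    FiniteField.sum_pow_units]
  congr 1
  exact propext ⟨fun h => Nat.eq_of_dvd_of_lt_two_mul hm0.ne' h hm, fun h => h ▸ dvd_rfl⟩

theorem Polynomial.eq_of_eval_eq_of_natDegree_lt_card {f g : K[X]}
    (hf : f.natDegree < Fintype.card K) (hg : g.natDegree < Fintype.card K)
    (hfg : ∀ y, f.eval y = g.eval y) : f = g := by
  refine sub_eq_zero.mp (eq_zero_of_natDegree_lt_card_of_eval_eq_zero' _ univ (by simp [hfg]) ?_)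
  rw [card_univ]
  exact (natDegree_sub_le f g).trans_lt (max_lt hf hg)

theorem Polynomial.natDegree_le_one_of_forall_pow_eq_eval {f : K[X]} {h : ℕ}
    (hf : f.natDegree ≤ h) (hh : 2 * h < Fintype.card K)
    (hpow : ∀ j ≤ h, ∃ g : K[X], g.natDegree ≤ h ∧ ∀ y, g.eval y = f.eval y ^ j) :
    f.natDegree ≤ 1 := by
  by_contra! hd
  obtain ⟨j, hj, hjd, hjd'⟩ : ∃ j ≤ h, h < j * f.natDegree ∧ j * f.natDegree ≤ 2 * h := by
    refine ⟨h / f.natDegree + 1, ?_, ?_, ?_⟩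
    · have := Nat.div_le_div_left (a := h) (show 2 ≤ f.natDegree from hd) two_pos
      omega
    · rw [add_mul, one_mul]
      exact Nat.lt_div_mul_add (by omega)
    · have := Nat.div_mul_le_self h f.natDegree
      rw [add_mul, one_mul]
      omega
  obtain ⟨g, hg, hgf⟩ := hpow j hj
  have hfg : f ^ j = g :=
    eq_of_eval_eq_of_natDegree_lt_card (by rw [natDegree_pow]; omega) (by omega) (by simp [hgf])
  have := congrArg natDegree hfg
  rw [natDegree_pow] at this
  omega

end FiniteField

section PrimeField

open Polynomial

variable {p : ℕ} [Fact p.Prime]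

theorem ZMod.sum_pow_mul_sub_pow {h d : ℕ} (hd : d ≤ h) (hh : h < p - 1) (y : ZMod p) :
    ∑ x : ZMod p, x ^ (p - 1 - h + d) * (x - y) ^ h = -(h.choose d) * (-y) ^ d := by
  have hsum : ∀ j ≤ h, ∑ x : ZMod p, x ^ (p - 1 - h + d + j) =
      if p - 1 - h + d + j = p - 1 then -1 else 0 := by
    intro j hj
    have := FiniteField.sum_pow_of_lt_two_mul (K := ZMod p) (m := p - 1 - h + d + j)
    rw [ZMod.card] at this
    exact this (by omega) (by omega)
  simp_rw [sub_eq_add_neg _ y, add_pow, mul_sum]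
  rw [sum_comm]
  have hterm : ∀ j ∈ range (h + 1),
      ∑ x : ZMod p, x ^ (p - 1 - h + d) * (x ^ j * (-y) ^ (h - j) * (h.choose j)) =
        (-y) ^ (h - j) * h.choose j * (if p - 1 - h + d + j = p - 1 then -1 else 0) := by
    intro j hj
    rw [← hsum j (by simpa [Nat.lt_succ_iff] using hj), mul_sum]
    exact sum_congr rfl fun x _ => by ring
  -- only `j = h - d` gives the exponent `p - 1`
  rw [sum_congr rfl hterm, sum_eq_single (h - d)]
  · rw [if_pos (by omega), Nat.choose_symm hd, show h - (h - d) = d by omega]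
    ring
  · intro j hj hjd
    rw [if_neg (by simp at hj; omega), mul_zero]
  · intro hd'
    exact absurd (mem_range.mpr (by omega)) hd'

theorem ZMod.choose_ne_zero {h d : ℕ} (hd : d ≤ h) (hh : h < p) :
    (h.choose d : ZMod p) ≠ 0 := by
  rw [Ne, ZMod.natCast_eq_zero_iff]
  intro hdvd
  have := (Nat.Prime.dvd_factorial Fact.out).mp (hdvd.trans ⟨d.factorial * (h - d).factorial,
    by rw [← mul_assoc, Nat.choose_mul_factorial_mul_factorial hd]⟩)
  omega

theorem ZMod.pow_mem_of_forall_sub_pow_mem {S : Submodule (ZMod p) (ZMod p → ZMod p)} {h : ℕ}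
    (hh : h < p - 1) (hS : ∀ x : ZMod p, (fun y => (x - y) ^ h) ∈ S) {d : ℕ} (hd : d ≤ h) :
    (fun y : ZMod p => y ^ d) ∈ S := by
  set c : ZMod p := -(h.choose d) * (-1) ^ d
  have hc : c ≠ 0 := mul_ne_zero (neg_ne_zero.mpr (ZMod.choose_ne_zero hd (by omega)))
    (pow_ne_zero _ (neg_ne_zero.mpr one_ne_zero))
  have hsum :
      (∑ x : ZMod p, x ^ (p - 1 - h + d) • fun y => (x - y) ^ h) = c • fun y => y ^ d := by
    funext y
    simp only [Finset.sum_apply, Pi.smul_apply, smul_eq_mul, ZMod.sum_pow_mul_sub_pow hd hh,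
      neg_pow y, c]
    ring
  have := S.smul_mem c⁻¹ (hsum ▸ S.sum_mem fun x _ => S.smul_mem _ (hS x))
  rwa [smul_smul, inv_mul_cancel₀ hc, one_smul] at this

theorem Polynomial.natDegree_lt_of_mem_degreeLT {R : Type*} [Semiring R] {n : ℕ} {f : R[X]}
    (hn : 0 < n) (hf : f ∈ degreeLT R n) : f.natDegree < n := by
  by_cases hf0 : f = 0
  · simpa [hf0]
  · exact (natDegree_lt_iff_degree_lt hf0).mpr (mem_degreeLT.mp hf)

theorem ZMod.finrank_map_aeval_id_degreeLT {h : ℕ} (hh : h < p) :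
    Module.finrank (ZMod p)
      ((degreeLT (ZMod p) (h + 1)).map (aeval fun y : ZMod p => y).toLinearMap) = h + 1 := by
  have hinj : Function.Injective
      ((aeval fun y : ZMod p => y).toLinearMap ∘ₗ (degreeLT (ZMod p) (h + 1)).subtype) := by
    rintro ⟨f, hf⟩ ⟨g, hg⟩ hfg
    refine Subtype.ext (eq_of_eval_eq_of_natDegree_lt_card ?_ ?_ fun y => ?_)
    · rw [ZMod.card]; exact (natDegree_lt_of_mem_degreeLT h.succ_pos hf).trans_le hh
    · rw [ZMod.card]; exact (natDegree_lt_of_mem_degreeLT h.succ_pos hg).trans_le hh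
    · simpa [aeval_fn_apply] using congrFun hfg y
  rw [← Submodule.range_subtype (degreeLT (ZMod p) (h + 1)), ← LinearMap.range_comp,
    LinearMap.finrank_range_of_inj hinj, (degreeLTEquiv _ _).finrank_eq, Module.finrank_fin_fun]

theorem ZMod.map_aeval_degreeLT_eq_of_sub_pow_eq {h : ℕ} (hh : 2 * h ≤ p - 1)
    {F : ZMod p → ZMod p} (hF : ∀ y z, (F y - F z) ^ h = (y - z) ^ h) :
    (degreeLT (ZMod p) (h + 1)).map (aeval F).toLinearMap =
      (degreeLT (ZMod p) (h + 1)).map (aeval fun y : ZMod p => y).toLinearMap := by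
  have hp := (Fact.out : p.Prime).two_le
  have hF_le : Module.finrank (ZMod p) ((degreeLT (ZMod p) (h + 1)).map (aeval F).toLinearMap)
      ≤ h + 1 := by
    refine (Submodule.finrank_map_le _ _).trans_eq ?_
    rw [(degreeLTEquiv _ _).finrank_eq, Module.finrank_fin_fun]
  -- by a dimension count it suffices that every `y ↦ y ^ d`, `d ≤ h`, lies on the left
  refine (Submodule.eq_of_le_of_finrank_le ?_
    (hF_le.trans (ZMod.finrank_map_aeval_id_degreeLT (by omega)).ge)).symm
  conv_lhs => rw [degreeLT_eq_span_X_pow, Submodule.map_span]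
  rw [Submodule.span_le]
  rintro _ ⟨_, hX, rfl⟩
  obtain ⟨d, hd, rfl⟩ := mem_image.mp hX
  -- `(x - y) ^ h = (F x - F y) ^ h` is a polynomial of degree `h` in `F y`
  have hsub : ∀ x : ZMod p, (fun y => (x - y) ^ h) ∈
      (degreeLT (ZMod p) (h + 1)).map (aeval F).toLinearMap := by
    intro x
    refine ⟨(C (F x) - X) ^ h, mem_degreeLT.mpr ?_, funext fun y => ?_⟩
    · compute_degree!
      exact WithBot.coe_lt_coe.mpr h.lt_add_one
    · simp [aeval_fn_apply, hF]
  rw [SetLike.mem_coe, AlgHom.toLinearMap_apply, map_pow, aeval_X]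
  exact ZMod.pow_mem_of_forall_sub_pow_mem (by omega) hsub (Nat.lt_succ_iff.mp (mem_range.mp hd))

theorem ZMod.exists_eval_eq_pow_of_sub_pow_eq {h : ℕ} (hh : 2 * h ≤ p - 1)
    {F : ZMod p → ZMod p} (hF : ∀ y z, (F y - F z) ^ h = (y - z) ^ h) {j : ℕ} (hj : j ≤ h) :
    ∃ g : (ZMod p)[X], g.natDegree ≤ h ∧ ∀ y, g.eval y = F y ^ j := by
  have hFj : F ^ j ∈ (degreeLT (ZMod p) (h + 1)).map (aeval F).toLinearMap :=
    ⟨X ^ j, mem_degreeLT.mpr (by rw [degree_X_pow]; exact_mod_cast Nat.lt_succ_of_le hj),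
      by simp⟩
  rw [ZMod.map_aeval_degreeLT_eq_of_sub_pow_eq hh hF] at hFj
  obtain ⟨g, hg, hgF⟩ := hFj
  exact ⟨g, Nat.lt_succ_iff.mp (natDegree_lt_of_mem_degreeLT h.succ_pos hg),
    fun y => by simpa [aeval_fn_apply] using congrFun hgF y⟩

theorem ZMod.eq_id_of_sub_pow_eq {h : ℕ} (hh1 : 1 ≤ h) (hh : 2 * h ≤ p - 1)
    {F : ZMod p → ZMod p} (hF : ∀ y z, (F y - F z) ^ h = (y - z) ^ h) {u v : ZMod p}
    (huv : u ≠ v) (hu : F u = u) (hv : F v = v) : F = id := by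
  have hp := (Fact.out : p.Prime).two_le
  obtain ⟨f, hf, hfF⟩ := ZMod.exists_eval_eq_pow_of_sub_pow_eq hh hF hh1
  simp only [pow_one] at hfF
  have hf1 : f.natDegree ≤ 1 :=
    natDegree_le_one_of_forall_pow_eq_eval hf (by rw [ZMod.card]; omega) fun j hj => by
      simpa only [hfF] using ZMod.exists_eval_eq_pow_of_sub_pow_eq hh hF hj
  have hfX : f = X := by
    refine sub_eq_zero.mp (eq_zero_of_natDegree_lt_card_of_eval_eq_zero' _ {u, v} ?_ ?_)
    · simp [hfF, hu, hv]
    · rw [card_pair huv]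
      exact (natDegree_sub_le _ _).trans_lt (by simp; omega)
  funext y
  rw [← hfF y, hfX, eval_X, id]

end PrimeField

namespace SRing

open Multiplicative

variable {G : Type*} [CommGroup G] [Fintype G] [DecidableEq G] {p : ℕ} [Fact p.Prime]
  (A : SRing G)

theorem eq_one_of_mem_autPerm (e : Multiplicative (ZMod p) ≃* G) (hrk : 2 < #A.basicSets)
    {f : Equiv.Perm G} (hf : f ∈ A.autPerm) {u v : G} (huv : u ≠ v) (hu : f u = u)
    (hv : f v = v) : f = 1 := by
  obtain ⟨h, hh1, hh, hpow⟩ := A.exists_pow_eq_pow_of_two_lt_card e hrk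
  let F : ZMod p → ZMod p := fun y => toAdd (e.symm (f (e (ofAdd y))))
  have heF : ∀ y, e (ofAdd (F y)) = f (e (ofAdd y)) := fun y => by simp [F]
  have hsub : ∀ y z : ZMod p, e (ofAdd (y - z)) = e (ofAdd y) * (e (ofAdd z))⁻¹ := by
    simp [ofAdd_sub, div_eq_mul_inv]
  have hF : ∀ y z, (F y - F z) ^ h = (y - z) ^ h := by
    intro y z
    obtain ⟨X, hX, hyz⟩ := A.exists_mem (e (ofAdd (y - z)))
    refine hpow X hX _ _ ?_ hyz
    rw [hsub, heF, heF, ← A.mem_autPerm.mp hf X hX, ← hsub]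
    exact hyz
  obtain ⟨u, rfl⟩ := e.exists_ofAdd_eq u
  obtain ⟨v, rfl⟩ := e.exists_ofAdd_eq v
  have hFid := ZMod.eq_id_of_sub_pow_eq hh1 hh hF (u := u) (v := v)
    (by rintro rfl; exact huv rfl) (by simp [F, hu]) (by simp [F, hv])
  ext x
  obtain ⟨a, rfl⟩ := e.exists_ofAdd_eq x
  rw [Equiv.Perm.one_apply, ← heF, congrFun hFid a, id]

end SRing

/-- For an S-ring `𝒜` over a group of prime order `p` with `p ≤ 3` or `rk(𝒜) > 2`,
the group `Aut(𝒜)` is 2-isolated: any subgroup of `Sym(G)` having the same orbits on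
`G × G` as `Aut(𝒜)` equals `Aut(𝒜)`. -/
theorem stmt12 (G : Type) [Group G] [Fintype G] [DecidableEq G]
    (p : ℕ) (hp : p.Prime) (hcard : Fintype.card G = p)
    (A : SRing G) (h : p ≤ 3 ∨ 2 < A.basicSets.card)
    (K : Subgroup (Equiv.Perm G))
    (heq : ∀ q r : G × G,
      (∃ k ∈ K, (k q.1, k q.2) = r) ↔ (∃ f ∈ A.autPerm, (f q.1, f q.2) = r)) :
    K = A.autPerm := by
  have hKA : K ≤ A.autPerm := A.le_autPerm_of_forall_exists fun k hk g g' => by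
    obtain ⟨f, hf, hfk⟩ := (heq (g, g') (k g, k g')).mp ⟨k, hk, rfl⟩
    exact ⟨f, hf, Prod.ext_iff.mp hfk⟩
  obtain ⟨u, v, huv⟩ := Fintype.exists_pair_of_one_lt_card (hcard ▸ hp.one_lt)
  refine Subgroup.eq_of_le_of_exists_agree_on_pair hKA (u := u) (v := v) (fun f hf => ?_)
    fun f hf hu hv => ?_
  · obtain ⟨k, hk, hkf⟩ := (heq (u, v) (f u, f v)).mpr ⟨f, hf, rfl⟩
    exact ⟨k, hk, Prod.ext_iff.mp hkf⟩
  rcases h with hp3 | hrk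
  · exact Equiv.Perm.eq_one_of_fixes_pair_of_card_le_three (hcard ▸ hp3) huv hu hv
  · have := Fact.mk hp
    have hG : Nat.card G = p := Nat.card_eq_fintype_card.trans hcard
    have : IsCyclic G := isCyclic_of_prime_card hG
    let _ : CommGroup G := IsCyclic.commGroup
    exact A.eq_one_of_mem_autPerm (hG ▸ zmodCyclicMulEquiv ‹_›) hrk hf huv hu hv
end

section
/- Let p ≥ 5 be a prime and G an abelian group of order 9p. Then for distinct i, j ∈ {1,2,3} the S-rings 𝒜_i^* and 𝒜_j^* over G are not algebraically isomorphic. -/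
open scoped Pointwise

/-- For `T` cyclic of order `3p`, the unique nontrivial subdirect product
`W₀ = {(α,β) ∈ Aut(T₃) × Aut(T_p) : α = id ↔ β ∈ M₀}` viewed inside `Aut(T)`, where
`T₃ = {x : x³ = 1}`, `T_p = {x : x^p = 1}` are the subgroups of orders `3`, `p` and `M₀`,
the index-2 subgroup of `Aut(T_p)`, consists of the squares `x ↦ x^(m²)`. -/
def W0 (p : ℕ) (T : Type*) [Group T] : Set (MulAut T) :=
  {f | (∀ x : T, x ^ 3 = 1 → f x = x) ↔ (∃ m : ℤ, ∀ x : T, x ^ p = 1 → f x = x ^ (m * m))}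

open scoped Classical in
/-- The orbits of `W₀` on `T`: the basic sets of `𝒜₀ = Cyc(W₀, T)`. -/
noncomputable def A0sets (p : ℕ) (T : Type*) [Group T] [Fintype T] [DecidableEq T] :
    Finset (Finset T) :=
  Finset.univ.image (fun g : T => Finset.univ.filter (fun x : T => ∃ f ∈ W0 p T, f g = x))

open scoped Classical in
/-- `Q`, the subgroup of order 3 of a cyclic group of order `3p`. -/
noncomputable def Qfin (T : Type*) [Group T] [Fintype T] : Finset T :=
  Finset.univ.filter (fun x => x ^ 3 = 1)

open scoped Classical in
/-- `R`, the subgroup of order `p` of a cyclic group of order `3p`. -/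
noncomputable def Rfin (p : ℕ) (T : Type*) [Group T] [Fintype T] : Finset T :=
  Finset.univ.filter (fun x => x ^ p = 1)

/-- Basic sets of `ℬ₁ = ℤQ ⊗ τ(R)`: the sets `{q}` and `q·R^#`, `q ∈ Q`. -/
noncomputable def B1sets (p : ℕ) (T : Type*) [CommGroup T] [Fintype T] [DecidableEq T] :
    Finset (Finset T) :=
  (Qfin T).image (fun q => ({q} : Finset T)) ∪
    (Qfin T).image (fun q => ((Rfin p T).erase 1).image (fun r => q * r))

open scoped Pointwise in
/-- Basic sets of `ℬ₂ = τ(Q) ⊗ τ(R)`: `{1}`, `Q^#`, `R^#`, `Q^#R^#`. -/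
noncomputable def B2sets (p : ℕ) (T : Type*) [CommGroup T] [Fintype T] [DecidableEq T] :
    Finset (Finset T) :=
  {{1}, (Qfin T).erase 1, (Rfin p T).erase 1, ((Qfin T).erase 1) * ((Rfin p T).erase 1)}

/-- Basic sets of `ℬ₃ = 𝒜₀` over `T`. -/
noncomputable def B3sets (p : ℕ) (T : Type*) [CommGroup T] [Fintype T] [DecidableEq T] :
    Finset (Finset T) :=
  A0sets p T

/-- The basic sets of the S-ring `𝒜ᵢ* = 𝒜₀ ≀_{U/L} ℬᵢ` over `G` (`|G| = 9p`, `L ≤ U ≤ G`,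
`|L| = 3`, `U` cyclic of order `3p`, so `G/L` is cyclic of order `3p`): the basic sets of
`𝒜₀` over `U` together with the full preimages under `G → G/L` of the basic sets of `ℬᵢ`
not contained in `U/L`. -/
noncomputable def AstarSets (p : ℕ) (G : Type*) [CommGroup G] [Fintype G] [DecidableEq G]
    (U L : Subgroup G) (Bsets : Finset (Finset (G ⧸ L))) : Finset (Finset G) :=
  letI : DecidablePred (· ∈ U) := Classical.decPred _
  letI : DecidableEq (G ⧸ L) := Classical.decEq _
  letI : Fintype (G ⧸ L) := Fintype.ofFinite _
  ((A0sets p ↥U).image (fun X => X.image (Subtype.val : ↥U → G))) ∪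
    ((Bsets.filter (fun Y =>
        ¬ Y ⊆ Finset.univ.filter (fun y => ∃ u ∈ U, (QuotientGroup.mk u : G ⧸ L) = y))).image
      (fun Y => Finset.univ.filter (fun g : G => (QuotientGroup.mk g : G ⧸ L) ∈ Y)))

/-!
An algebraic isomorphism preserves the size of each basic set (sum the structure constants
`c^{{1}}_{X,Y}` over `Y`), hence the number of basic sets of each size. The three S-rings share
the basic sets of `𝒜₀` over `U`; the others are the preimages, of size `3 |Y|`, of the basic sets
`Y ⊄ U/L = R` of `ℬᵢ`. Among those `Y`, only `ℬ₁` has singletons (`{q}`, `1 ≠ q ∈ Q`) and only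
`ℬ₂` has a set of size `2 (p - 1)` (namely `Q^# R^#`): a `W₀`-orbit outside `R` has size strictly
between `1` and `φ(3p) = 2 (p - 1)`.
-/

open Finset

lemma structConst_eq_card_filter {G : Type*} [Group G] [DecidableEq G] (X Y : Finset G) (z : G) :
    structConst X Y z = #{a ∈ X | a⁻¹ * z ∈ Y} := by
  refine card_nbij' Prod.fst (fun a => (a, a⁻¹ * z)) ?_ ?_ ?_ ?_
  all_goals simp only [Set.MapsTo, Set.LeftInvOn, coe_filter, mem_product,
    Set.mem_ofPred_eq, Prod.forall]
  · rintro a b ⟨⟨ha, hb⟩, rfl⟩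
    simpa using And.intro ha hb
  · intro a ha
    simpa using ha
  · rintro a b ⟨-, rfl⟩
    simp
  · simp

namespace SRing

variable {G G' : Type*} [Group G] [Fintype G] [DecidableEq G]
  [Group G'] [Fintype G'] [DecidableEq G']

lemma sum_structConst (A : SRing G) (X : Finset G) (z : G) :
    ∑ Y ∈ A.basicSets, structConst X Y z = #X := by
  have hunique (g : G) : #{Y ∈ A.basicSets | g ∈ Y} = 1 := by
    obtain ⟨Y₀, hY₀, hg⟩ := A.exists_mem g
    refine card_eq_one.mpr ⟨Y₀, eq_singleton_iff_unique_mem.mpr ⟨mem_filter.mpr ⟨hY₀, hg⟩, ?_⟩⟩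
    rintro Y hY
    rw [mem_filter] at hY
    by_contra hne
    exact disjoint_left.mp (A.disj Y hY.1 Y₀ hY₀ hne) hY.2 hg
  simp_rw [structConst_eq_card_filter, card_filter]
  rw [sum_comm]
  simp_rw [← card_filter, hunique, sum_const, smul_eq_mul, mul_one]

namespace IsAlgIso

variable {A : SRing G} {B : SRing G'} {φ : Finset G → Finset G'}

lemma card_apply (h : A.IsAlgIso B φ) {X : Finset G} (hX : X ∈ A.basicSets) :
    #(φ X) = #X := by
  obtain ⟨u, hu⟩ := B.nonempty_mem _ (h.1.mapsTo A.one_mem)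
  calc #(φ X) = ∑ Y' ∈ B.basicSets, structConst (φ X) Y' u := (B.sum_structConst _ u).symm
    _ = ∑ Y ∈ A.basicSets, structConst (φ X) (φ Y) u :=
        (sum_nbij φ h.1.mapsTo h.1.injOn h.1.surjOn fun _ _ => rfl).symm
    _ = ∑ Y ∈ A.basicSets, structConst X Y 1 :=
        sum_congr rfl fun Y hY => (h.2 X hX Y hY {1} A.one_mem 1 (mem_singleton_self 1) u hu).symm
    _ = #X := A.sum_structConst X 1

lemma card_filter_card_eq (h : A.IsAlgIso B φ) (c : ℕ) :
    #{X ∈ A.basicSets | #X = c} = #{Y ∈ B.basicSets | #Y = c} := by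
  refine card_nbij φ ?_ ?_ ?_
  · intro X hX
    simp only [coe_filter, Set.mem_ofPred_eq] at hX ⊢
    exact ⟨h.1.mapsTo hX.1, (h.card_apply hX.1).trans hX.2⟩
  · exact h.1.injOn.mono fun X hX => (mem_filter.mp hX).1
  · intro Y hY
    simp only [coe_filter, Set.mem_ofPred_eq] at hY
    obtain ⟨X, hX, rfl⟩ := h.1.surjOn hY.1
    exact ⟨X, by simpa [h.card_apply hX] using And.intro hX hY.2, rfl⟩

end IsAlgIso

lemma not_exists_isAlgIso_of_card_filter_ne {A : SRing G} {B : SRing G'} (c : ℕ)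
    (h : #{X ∈ A.basicSets | #X = c} ≠ #{Y ∈ B.basicSets | #Y = c}) :
    ¬ ∃ φ, A.IsAlgIso B φ :=
  fun ⟨_, hφ⟩ => h (hφ.card_filter_card_eq c)

end SRing

section Cyclic

lemma isCyclic_of_card_eq_mul_of_prime {α : Type*} [CommGroup α] [Finite α] {q r : ℕ}
    (hq : q.Prime) (hr : r.Prime) (hqr : q ≠ r) (hcard : Nat.card α = q * r) : IsCyclic α := by
  have : Fact q.Prime := ⟨hq⟩
  have : Fact r.Prime := ⟨hr⟩
  obtain ⟨a, ha⟩ := exists_prime_orderOf_dvd_card' q (hcard ▸ dvd_mul_right q r)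
  obtain ⟨b, hb⟩ := exists_prime_orderOf_dvd_card' r (hcard ▸ dvd_mul_left r q)
  have hab : (orderOf a).Coprime (orderOf b) := ha ▸ hb ▸ (Nat.coprime_primes hq hr).mpr hqr
  refine isCyclic_of_orderOf_eq_card (a * b) ?_
  rw [(Commute.all a b).orderOf_mul_eq_mul_orderOf_of_coprime hab, ha, hb, hcard]

variable {α : Type*} [Group α] [Fintype α] [IsCyclic α]

lemma IsCyclic.card_filter_pow_eq_one [DecidableEq α] {d : ℕ} (hd : d ∣ Fintype.card α) :
    #{a : α | a ^ d = 1} = d := by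
  have hd0 : d ≠ 0 := by rintro rfl; simp at hd
  rw [← sum_card_orderOf_eq_card_pow_eq_one hd0]
  conv_rhs => rw [← Nat.sum_totient d]
  exact sum_congr rfl fun m hm =>
    IsCyclic.card_orderOf_eq_totient ((Nat.dvd_of_mem_divisors hm).trans hd)

lemma IsCyclic.mem_iff_pow_natCard_eq_one (H : Subgroup α) {x : α} :
    x ∈ H ↔ x ^ Nat.card H = 1 := by
  classical
  have hpow {y : α} (hy : y ∈ H) : y ^ Nat.card H = 1 :=
    orderOf_dvd_iff_pow_eq_one.mp (H.orderOf_dvd_natCard hy)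
  refine ⟨hpow, fun hx => ?_⟩
  have hsub : (H : Set α).toFinset ⊆ ({a : α | a ^ Nat.card H = 1} : Finset α) := fun y hy => by
    rw [Set.mem_toFinset] at hy
    exact mem_filter_univ y |>.mpr (hpow hy)
  have hcard : #{a : α | a ^ Nat.card H = 1} ≤ #(H : Set α).toFinset := by
    rw [Set.toFinset_card, ← Nat.card_eq_fintype_card]
    exact IsCyclic.card_pow_eq_one_le Nat.card_pos
  rw [← SetLike.mem_coe, ← Set.mem_toFinset, eq_of_subset_of_card_le hsub hcard]
  exact mem_filter_univ x |>.mpr hx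

end Cyclic

lemma eq_one_of_pow_eq_one_of_coprime {α : Type*} [Monoid α] {x : α} {m n : ℕ}
    (hmn : m.Coprime n) (hm : x ^ m = 1) (hn : x ^ n = 1) : x = 1 :=
  orderOf_eq_one_iff.mp <| Nat.eq_one_of_dvd_coprimes hmn
    (orderOf_dvd_of_pow_eq_one hm) (orderOf_dvd_of_pow_eq_one hn)

section OrderThreeMulPrime

variable {T : Type*} [CommGroup T] [Fintype T] {p : ℕ}

@[simp] lemma mem_Qfin {x : T} : x ∈ Qfin T ↔ x ^ 3 = 1 := by
  simp [Qfin]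

@[simp] lemma mem_Rfin {x : T} : x ∈ Rfin p T ↔ x ^ p = 1 := by
  simp [Rfin]

lemma coprime_three_of_five_le (hp : p.Prime) (hp5 : 5 ≤ p) : Nat.Coprime 3 p :=
  (Nat.coprime_primes Nat.prime_three hp).mpr (by omega)

lemma isCyclic_of_card_eq_three_mul (hp : p.Prime) (hp5 : 5 ≤ p)
    (hT : Fintype.card T = 3 * p) : IsCyclic T :=
  isCyclic_of_card_eq_mul_of_prime Nat.prime_three hp (by omega)
    (by rw [Nat.card_eq_fintype_card, hT])

lemma card_Qfin (hp : p.Prime) (hp5 : 5 ≤ p) (hT : Fintype.card T = 3 * p) :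
    #(Qfin T) = 3 := by
  classical
  have := isCyclic_of_card_eq_three_mul hp hp5 hT
  convert IsCyclic.card_filter_pow_eq_one (hT ▸ dvd_mul_right 3 p) using 2
  ext; simp

lemma card_Rfin (hp : p.Prime) (hp5 : 5 ≤ p) (hT : Fintype.card T = 3 * p) :
    #(Rfin p T) = p := by
  classical
  have := isCyclic_of_card_eq_three_mul hp hp5 hT
  convert IsCyclic.card_filter_pow_eq_one (hT ▸ dvd_mul_left p 3) using 2
  ext; simp

lemma card_Qfin_erase_one (hp : p.Prime) (hp5 : 5 ≤ p) (hT : Fintype.card T = 3 * p)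
    [DecidableEq T] : #((Qfin T).erase 1) = 2 := by
  rw [card_erase_of_mem (by simp), card_Qfin hp hp5 hT]

lemma card_Rfin_erase_one (hp : p.Prime) (hp5 : 5 ≤ p) (hT : Fintype.card T = 3 * p)
    [DecidableEq T] : #((Rfin p T).erase 1) = p - 1 := by
  rw [card_erase_of_mem (by simp), card_Rfin hp hp5 hT]

lemma card_Qfin_erase_one_mul_Rfin_erase_one (hp : p.Prime) (hp5 : 5 ≤ p)
    (hT : Fintype.card T = 3 * p) [DecidableEq T] :
    #((Qfin T).erase 1 * (Rfin p T).erase 1) = 2 * (p - 1) := by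
  rw [card_mul_iff.mpr ?_, card_Qfin_erase_one hp hp5 hT, card_Rfin_erase_one hp hp5 hT]
  rintro ⟨q, r⟩ hqr ⟨q', r'⟩ hqr' h
  simp only [Set.mem_prod, mem_coe, mem_erase, mem_Qfin, mem_Rfin] at hqr hqr'
  have hdiv : q / q' = r' / r := div_eq_div_iff_mul_eq_mul.mpr (h.trans (mul_comm _ _))
  have hq : q / q' = 1 := eq_one_of_pow_eq_one_of_coprime (coprime_three_of_five_le hp hp5)
    (by rw [div_pow, hqr.1.2, hqr'.1.2, div_one])
    (by rw [hdiv, div_pow, hqr.2.2, hqr'.2.2, div_one])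
  rw [div_eq_one] at hq
  subst hq
  simp only [Prod.mk.injEq, true_and]
  exact mul_left_cancel h

end OrderThreeMulPrime

section W0

variable {T : Type*} [CommGroup T] {p : ℕ}

noncomputable def powAut (k : ℕ) (h : (Nat.card T).Coprime k) : MulAut T :=
  { powCoprime h with map_mul' := fun x y => mul_pow x y k }

@[simp] lemma powAut_apply (k : ℕ) (h : (Nat.card T).Coprime k) (x : T) :
    powAut k h x = x ^ k := rfl

omit [CommGroup T] in
lemma one_mem_W0 [Group T] : (1 : MulAut T) ∈ W0 p T :=
  iff_of_true (fun _ _ => rfl) ⟨1, fun x _ => by simp⟩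

lemma exists_mod_three_eq_and_not_isSquare (hp : p.Prime) (hp5 : 5 ≤ p) (s : ℕ) :
    ∃ k : ℕ, k % 3 = s % 3 ∧ ¬ IsSquare (k : ZMod p) := by
  have : Fact p.Prime := ⟨hp⟩
  obtain ⟨b, hb⟩ := FiniteField.exists_nonsquare (F := ZMod p)
    (by rw [ZMod.ringChar_zmod_n]; omega)
  obtain ⟨k, hk3, hkp⟩ := Nat.chineseRemainder (coprime_three_of_five_le hp hp5) s b.val
  refine ⟨k, hk3, ?_⟩
  rwa [(ZMod.natCast_eq_natCast_iff k b.val p).mpr hkp, ZMod.natCast_zmod_val]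

lemma coprime_three_mul_of_not_isSquare (hp : p.Prime) {k : ℕ} (hk3 : k % 3 ≠ 0)
    (hk : ¬ IsSquare (k : ZMod p)) : Nat.Coprime (3 * p) k := by
  refine Nat.Coprime.mul_left (Nat.prime_three.coprime_iff_not_dvd.mpr (by omega))
    (hp.coprime_iff_not_dvd.mpr fun hpk => hk ?_)
  rw [(ZMod.natCast_eq_zero_iff k p).mpr hpk]
  exact ⟨0, by simp⟩

lemma isSquare_of_pow_eq_pow_mul_self {c : T} (hc : orderOf c = p) {k : ℕ} {m : ℤ}
    (h : c ^ k = c ^ (m * m)) : IsSquare (k : ZMod p) := by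
  rw [← zpow_natCast, zpow_eq_zpow_iff_modEq, hc, ← ZMod.intCast_eq_intCast_iff] at h
  exact ⟨m, by exact_mod_cast h⟩

variable [Fintype T]

lemma powAut_mem_W0 (hp : p.Prime) (hT : Fintype.card T = 3 * p) {k : ℕ} (hk3 : k % 3 = 2)
    (hk : ¬ IsSquare (k : ZMod p)) (hco : (Nat.card T).Coprime k) :
    powAut k hco ∈ W0 p T := by
  have : Fact p.Prime := ⟨hp⟩
  rw [← Nat.card_eq_fintype_card] at hT
  obtain ⟨a, ha⟩ := exists_prime_orderOf_dvd_card' 3 (hT ▸ dvd_mul_right 3 p)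
  obtain ⟨c, hc⟩ := exists_prime_orderOf_dvd_card' p (hT ▸ dvd_mul_left p 3)
  refine iff_of_false (fun hfix => ?_) fun ⟨m, hm⟩ =>
    hk (isSquare_of_pow_eq_pow_mul_self hc (hm c (hc ▸ pow_orderOf_eq_one c)))
  have h : a ^ k = a ^ 1 := by simpa using hfix a (ha ▸ pow_orderOf_eq_one a)
  rw [pow_eq_pow_iff_modEq, ha] at h
  have : k % 3 = 1 % 3 := h
  omega

lemma apply_ne_pow_of_mem_W0 (hp : p.Prime) (hT : Fintype.card T = 3 * p) {g : T}
    (hg : orderOf g = 3 * p) {k : ℕ} (hk3 : k % 3 = 1) (hk : ¬ IsSquare (k : ZMod p))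
    {f : MulAut T} (hf : f ∈ W0 p T) : f g ≠ g ^ k := by
  have : Fact p.Prime := ⟨hp⟩
  intro hfg
  rw [← Nat.card_eq_fintype_card] at hT
  have htop : Subgroup.zpowers g = ⊤ :=
    Subgroup.eq_top_of_card_eq _ (by rw [Nat.card_zpowers, hg, hT])
  have hfx (x : T) : f x = x ^ k := by
    obtain ⟨j, rfl⟩ := Subgroup.mem_zpowers_iff.mp (htop ▸ Subgroup.mem_top x)
    rw [map_zpow, hfg, ← zpow_natCast, ← zpow_natCast, ← zpow_mul, ← zpow_mul, mul_comm]
  obtain ⟨m, hm⟩ := hf.mp fun x hx => by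
    rw [hfx, ← Nat.div_add_mod k 3, hk3, pow_add, pow_mul, hx, one_pow, one_mul, pow_one]
  obtain ⟨c, hc⟩ := exists_prime_orderOf_dvd_card' p (hT ▸ dvd_mul_left p 3)
  exact hk (isSquare_of_pow_eq_pow_mul_self hc
    ((hfx c).symm.trans (hm c (hc ▸ pow_orderOf_eq_one c))))

end W0

section Orbits

variable {T : Type*} [CommGroup T] [Fintype T] [DecidableEq T] {p : ℕ}

lemma eq_three_or_eq_three_mul_of_dvd (hp : p.Prime) {d : ℕ} (hd : d ∣ 3 * p)
    (hdp : ¬ d ∣ p) : d = 3 ∨ d = 3 * p := by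
  obtain ⟨d₁, d₂, h₁, h₂, rfl⟩ := Nat.dvd_mul.mp hd
  rcases (Nat.dvd_prime Nat.prime_three).mp h₁ with rfl | rfl <;>
    rcases (Nat.dvd_prime hp).mp h₂ with rfl | rfl <;> simp_all

lemma exists_orbit_rep_of_mem_A0sets (hp : p.Prime) (hT : Fintype.card T = 3 * p)
    {X : Finset T} (hX : X ∈ A0sets p T) (hXR : ¬ X ⊆ Rfin p T) :
    ∃ g : T, (orderOf g = 3 ∨ orderOf g = 3 * p) ∧
      ∀ x, x ∈ X ↔ ∃ f ∈ W0 p T, f g = x := by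
  classical
  obtain ⟨g, -, rfl⟩ := mem_image.mp hX
  refine ⟨g, eq_three_or_eq_three_mul_of_dvd hp (hT ▸ orderOf_dvd_card) fun hgp => hXR ?_,
    by simp⟩
  intro x hx
  obtain ⟨f, -, rfl⟩ := (mem_filter.mp hx).2
  rw [mem_Rfin, ← orderOf_dvd_iff_pow_eq_one, MulEquiv.orderOf_eq]
  exact hgp

/-- `x ↦ x^k`, with `k ≡ 2 (mod 3)` a nonresidue mod `p`, lies in `W₀` and moves `g`. -/
lemma one_lt_card_of_mem_A0sets (hp : p.Prime) (hp5 : 5 ≤ p) (hT : Fintype.card T = 3 * p)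
    {X : Finset T} (hX : X ∈ A0sets p T) (hXR : ¬ X ⊆ Rfin p T) : 1 < #X := by
  obtain ⟨g, hg, hXg⟩ := exists_orbit_rep_of_mem_A0sets hp hT hX hXR
  obtain ⟨k, hk3, hk⟩ := exists_mod_three_eq_and_not_isSquare hp hp5 2
  have hco : (Nat.card T).Coprime k := by
    rw [Nat.card_eq_fintype_card, hT]
    exact coprime_three_mul_of_not_isSquare hp (by omega) hk
  refine one_lt_card.mpr ⟨g, (hXg g).mpr ⟨1, one_mem_W0, rfl⟩, g ^ k,
    (hXg _).mpr ⟨_, powAut_mem_W0 hp hT hk3 hk hco, rfl⟩, fun h => ?_⟩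
  have h3 : 3 ∣ orderOf g := by rcases hg with h | h <;> simp [h]
  have h' : g ^ k = g ^ 1 := by rw [pow_one]; exact h.symm
  rw [pow_eq_pow_iff_modEq] at h'
  have : k % 3 = 1 % 3 := Nat.ModEq.of_dvd h3 h'
  omega

/-- An orbit of elements of order `3 p` misses `g ^ k` for `k ≡ 1 (mod 3)` a nonresidue mod `p`,
so it is a proper subset of the `φ(3p) = 2(p - 1)` generators. -/
lemma card_lt_of_mem_A0sets (hp : p.Prime) (hp5 : 5 ≤ p) (hT : Fintype.card T = 3 * p)
    {X : Finset T} (hX : X ∈ A0sets p T) (hXR : ¬ X ⊆ Rfin p T) : #X < 2 * (p - 1) := by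
  have := isCyclic_of_card_eq_three_mul hp hp5 hT
  obtain ⟨g, hg, hXg⟩ := exists_orbit_rep_of_mem_A0sets hp hT hX hXR
  have hsub : X ⊆ ({x | orderOf x = orderOf g} : Finset T) := fun x hx => by
    obtain ⟨f, -, rfl⟩ := (hXg x).mp hx
    simp [MulEquiv.orderOf_eq]
  rcases hg with hg | hg
  · calc #X ≤ #{x : T | orderOf x = 3} := hg ▸ card_le_card hsub
      _ = 2 := IsCyclic.card_orderOf_eq_totient (hT ▸ dvd_mul_right 3 p)
      _ < 2 * (p - 1) := by omega
  · obtain ⟨k, hk3, hk⟩ := exists_mod_three_eq_and_not_isSquare hp hp5 1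
    have hco := coprime_three_mul_of_not_isSquare hp (by omega) hk
    have hgk : g ^ k ∉ X := fun h => by
      obtain ⟨f, hf, hfg⟩ := (hXg _).mp h
      exact apply_ne_pow_of_mem_W0 hp hT hg hk3 hk hf hfg
    have hgk' : g ^ k ∈ ({x | orderOf x = orderOf g} : Finset T) := by
      simp [(hg ▸ hco : Nat.Coprime (orderOf g) k).orderOf_pow]
    have htot : #{x : T | orderOf x = 3 * p} = 2 * (p - 1) := by
      rw [IsCyclic.card_orderOf_eq_totient hT.symm.dvd,
        Nat.totient_mul (coprime_three_of_five_le hp hp5), Nat.totient_prime Nat.prime_three,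
        Nat.totient_prime hp]
    calc #X < #({x | orderOf x = orderOf g} : Finset T) :=
          card_lt_card ((ssubset_iff_of_subset hsub).mpr ⟨_, hgk', hgk⟩)
      _ = 2 * (p - 1) := hg ▸ htot

end Orbits

section Quotient

noncomputable def preimageMk {G : Type*} [Group G] [Fintype G] (L : Subgroup G)
    [DecidableEq (G ⧸ L)] (Y : Finset (G ⧸ L)) : Finset G :=
  {g | (QuotientGroup.mk g : G ⧸ L) ∈ Y}

variable {G : Type*} [Group G] [Fintype G] {L : Subgroup G}
  [DecidableEq (G ⧸ L)]

@[simp] lemma mem_preimageMk {Y : Finset (G ⧸ L)} {g : G} :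
    g ∈ preimageMk L Y ↔ (QuotientGroup.mk g : G ⧸ L) ∈ Y := by
  simp [preimageMk]

lemma card_preimageMk (Y : Finset (G ⧸ L)) : #(preimageMk L Y) = Nat.card L * #Y := by
  have hcoe : (preimageMk L Y : Set G) = QuotientGroup.mk ⁻¹' (Y : Set (G ⧸ L)) := by
    ext; simp
  rw [← Set.ncard_coe_finset, hcoe, ← Nat.card_coe_set_eq, QuotientGroup.card_preimage_mk,
    Nat.card_coe_set_eq, Set.ncard_coe_finset]

lemma preimageMk_injective : Function.Injective (preimageMk (G := G) L) := by
  intro Y Y' h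
  ext y
  obtain ⟨g, rfl⟩ := QuotientGroup.mk_surjective y
  simpa using congrArg (g ∈ ·) h

end Quotient

section AstarSets

noncomputable def A0setsOn (p : ℕ) {G : Type*} [Group G] [Fintype G] [DecidableEq G]
    (U : Subgroup G) : Finset (Finset G) :=
  letI : DecidablePred (· ∈ U) := Classical.decPred _
  (A0sets p U).image (Finset.image Subtype.val)

lemma mem_of_mem_A0setsOn {p : ℕ} {G : Type*} [Group G] [Fintype G] [DecidableEq G]
    {U : Subgroup G} {Z : Finset G} (hZ : Z ∈ A0setsOn p U) {g : G}
    (hg : g ∈ Z) : g ∈ U := by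
  classical
  obtain ⟨X, -, rfl⟩ := mem_image.mp hZ
  obtain ⟨x, -, rfl⟩ := mem_image.mp hg
  exact x.2

variable {p : ℕ} {G : Type*} [CommGroup G] [Fintype G] [DecidableEq G] {U L : Subgroup G}
  [Fintype (G ⧸ L)] [DecidableEq (G ⧸ L)]

lemma AstarSets_eq (hU : ∀ y : G ⧸ L, (∃ u ∈ U, (u : G ⧸ L) = y) ↔ y ^ p = 1)
    (Bs : Finset (Finset (G ⧸ L))) :
    AstarSets p G U L Bs =
      A0setsOn p U ∪ {Y ∈ Bs | ¬ Y ⊆ Rfin p (G ⧸ L)}.image (preimageMk L) := by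
  simp only [AstarSets, A0setsOn, Rfin, subset_iff, mem_filter, mem_univ, true_and, hU]
  -- `AstarSets` carries its own `Fintype` and `DecidableEq` instances on `G ⧸ L`.
  convert rfl
  ext
  simp

lemma card_filter_AstarSets (hU : ∀ y : G ⧸ L, (∃ u ∈ U, (u : G ⧸ L) = y) ↔ y ^ p = 1)
    (Bs : Finset (Finset (G ⧸ L))) (c : ℕ) :
    #{Z ∈ AstarSets p G U L Bs | #Z = Nat.card L * c} =
      #{Z ∈ A0setsOn p U | #Z = Nat.card L * c} + #{Y ∈ Bs | ¬ Y ⊆ Rfin p (G ⧸ L) ∧ #Y = c} := by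
  have hdisj :
      Disjoint (A0setsOn p U) ({Y ∈ Bs | ¬ Y ⊆ Rfin p (G ⧸ L)}.image (preimageMk L)) := by
    refine disjoint_left.mpr fun Z hZU hZB => ?_
    obtain ⟨Y, hY, rfl⟩ := mem_image.mp hZB
    obtain ⟨y, hyY, hyR⟩ := not_subset.mp (mem_filter.mp hY).2
    obtain ⟨g, rfl⟩ := QuotientGroup.mk_surjective y
    have hgU := mem_of_mem_A0setsOn hZU (mem_preimageMk.mpr hyY)
    exact hyR (mem_Rfin.mpr ((hU _).mp ⟨g, hgU, rfl⟩))
  rw [AstarSets_eq hU, filter_union, card_union_of_disjoint (disjoint_filter_filter hdisj),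
    filter_image, card_image_of_injective _ preimageMk_injective, filter_filter]
  simp only [card_preimageMk, Nat.mul_left_cancel_iff Nat.card_pos]

end AstarSets

section QuotientOfOrderNineP

variable {p : ℕ} {G : Type*} [CommGroup G] [Fintype G] {U L : Subgroup G} [Fintype (G ⧸ L)]

lemma card_quotient_eq (hcard : Fintype.card G = 9 * p) (hL3 : Nat.card L = 3) :
    Fintype.card (G ⧸ L) = 3 * p := by
  have h := L.card_eq_card_quotient_mul_card_subgroup
  rw [Nat.card_eq_fintype_card, hcard, hL3, Nat.card_eq_fintype_card] at h
  omega

/-- `U / L` is the subgroup of order `p` of the cyclic group `G / L`, hence equals `R`. -/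
lemma exists_mk_eq_iff_pow_eq_one (hp : p.Prime) (hp5 : 5 ≤ p)
    (hcard : Fintype.card G = 9 * p) (hLU : L ≤ U) (hL3 : Nat.card L = 3)
    (hU3p : Nat.card U = 3 * p) (y : G ⧸ L) :
    (∃ u ∈ U, (u : G ⧸ L) = y) ↔ y ^ p = 1 := by
  have := isCyclic_of_card_eq_three_mul hp hp5 (card_quotient_eq hcard hL3)
  let f : U →* G ⧸ L := (QuotientGroup.mk' L).comp U.subtype
  have hker : Nat.card f.ker = 3 := by
    have : f.ker = L.subgroupOf U := by
      ext u
      simp [f, Subgroup.mem_subgroupOf]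
    rw [this, Nat.card_congr (Subgroup.subgroupOfEquivOfLe hLU).toEquiv, hL3]
  have hrange : Nat.card f.range = p := by
    have h := f.ker.card_mul_index
    rw [Subgroup.index_ker, hker, hU3p] at h
    omega
  rw [← hrange, ← IsCyclic.mem_iff_pow_natCard_eq_one]
  simp [f]

end QuotientOfOrderNineP

section BasicSetCounts

variable {T : Type*} [CommGroup T] [Fintype T] [DecidableEq T] {p : ℕ}

lemma pow_ne_one_of_mem_Qfin_erase_one (hp : p.Prime) (hp5 : 5 ≤ p) {q : T}
    (hq : q ∈ (Qfin T).erase 1) : q ^ p ≠ 1 := by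
  rw [mem_erase, mem_Qfin] at hq
  exact fun hqp =>
    hq.1 (eq_one_of_pow_eq_one_of_coprime (coprime_three_of_five_le hp hp5) hq.2 hqp)

lemma card_filter_B1sets_one_pos (hp : p.Prime) (hp5 : 5 ≤ p) (hT : Fintype.card T = 3 * p) :
    0 < #{Y ∈ B1sets p T | ¬ Y ⊆ Rfin p T ∧ #Y = 1} := by
  obtain ⟨q, hq⟩ := card_pos.mp (by rw [card_Qfin_erase_one hp hp5 hT]; omega)
  refine card_pos.mpr ⟨{q}, mem_filter.mpr ⟨?_, ?_, card_singleton q⟩⟩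
  · exact mem_union_left _ (mem_image_of_mem _ (mem_of_mem_erase hq))
  · simpa using pow_ne_one_of_mem_Qfin_erase_one hp hp5 hq

lemma card_filter_B1sets_two_mul (hp : p.Prime) (hp5 : 5 ≤ p) (hT : Fintype.card T = 3 * p) :
    #{Y ∈ B1sets p T | ¬ Y ⊆ Rfin p T ∧ #Y = 2 * (p - 1)} = 0 := by
  refine card_eq_zero.mpr (filter_eq_empty_iff.mpr fun Y hY ⟨_, hcard⟩ => ?_)
  simp only [B1sets, mem_union, mem_image] at hY
  rcases hY with ⟨q, -, rfl⟩ | ⟨q, -, rfl⟩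
  · rw [card_singleton] at hcard
    omega
  · rw [card_image_of_injective _ (mul_right_injective q), card_Rfin_erase_one hp hp5 hT]
      at hcard
    omega

lemma card_filter_B2sets_one (hp : p.Prime) (hp5 : 5 ≤ p) (hT : Fintype.card T = 3 * p) :
    #{Y ∈ B2sets p T | ¬ Y ⊆ Rfin p T ∧ #Y = 1} = 0 := by
  refine card_eq_zero.mpr (filter_eq_empty_iff.mpr fun Y hY ⟨hYR, hcard⟩ => ?_)
  simp only [B2sets, mem_insert, mem_singleton] at hY
  rcases hY with rfl | rfl | rfl | rfl
  · exact hYR (by simp)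
  · rw [card_Qfin_erase_one hp hp5 hT] at hcard
    omega
  · rw [card_Rfin_erase_one hp hp5 hT] at hcard
    omega
  · rw [card_Qfin_erase_one_mul_Rfin_erase_one hp hp5 hT] at hcard
    omega

lemma card_filter_B2sets_two_mul_pos (hp : p.Prime) (hp5 : 5 ≤ p)
    (hT : Fintype.card T = 3 * p) :
    0 < #{Y ∈ B2sets p T | ¬ Y ⊆ Rfin p T ∧ #Y = 2 * (p - 1)} := by
  obtain ⟨q, hq⟩ := card_pos.mp (by rw [card_Qfin_erase_one hp hp5 hT]; omega)
  obtain ⟨r, hr⟩ := card_pos.mp (by rw [card_Rfin_erase_one hp hp5 hT]; omega)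
  refine card_pos.mpr ⟨_, mem_filter.mpr ⟨by simp [B2sets], fun hsub => ?_,
    card_Qfin_erase_one_mul_Rfin_erase_one hp hp5 hT⟩⟩
  have hqr := mem_Rfin.mp (hsub (mul_mem_mul hq hr))
  rw [mul_pow, mem_Rfin.mp (mem_of_mem_erase hr), mul_one] at hqr
  exact pow_ne_one_of_mem_Qfin_erase_one hp hp5 hq hqr

lemma card_filter_B3sets_one (hp : p.Prime) (hp5 : 5 ≤ p) (hT : Fintype.card T = 3 * p) :
    #{Y ∈ B3sets p T | ¬ Y ⊆ Rfin p T ∧ #Y = 1} = 0 :=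
  card_eq_zero.mpr <| filter_eq_empty_iff.mpr fun _ hY ⟨hYR, hcard⟩ =>
    (one_lt_card_of_mem_A0sets hp hp5 hT hY hYR).ne' hcard

lemma card_filter_B3sets_two_mul (hp : p.Prime) (hp5 : 5 ≤ p) (hT : Fintype.card T = 3 * p) :
    #{Y ∈ B3sets p T | ¬ Y ⊆ Rfin p T ∧ #Y = 2 * (p - 1)} = 0 :=
  card_eq_zero.mpr <| filter_eq_empty_iff.mpr fun _ hY ⟨hYR, hcard⟩ =>
    (card_lt_of_mem_A0sets hp hp5 hT hY hYR).ne hcard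

end BasicSetCounts

theorem stmt19_general (p : ℕ) (hp : p.Prime) (hp5 : 5 ≤ p)
    (G : Type) [CommGroup G] [Fintype G] [DecidableEq G]
    (hcard : Fintype.card G = 9 * p)
    (U L : Subgroup G) (hLU : L ≤ U)
    (hL3 : Nat.card L = 3) (hU3p : Nat.card U = 3 * p)
    [Fintype (G ⧸ L)] [DecidableEq (G ⧸ L)]
    (A₁ A₂ A₃ : SRing G)
    (h₁ : A₁.basicSets = AstarSets p G U L (B1sets p (G ⧸ L)))
    (h₂ : A₂.basicSets = AstarSets p G U L (B2sets p (G ⧸ L)))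
    (h₃ : A₃.basicSets = AstarSets p G U L (B3sets p (G ⧸ L))) :
    (¬ ∃ φ, A₁.IsAlgIso A₂ φ) ∧ (¬ ∃ φ, A₂.IsAlgIso A₁ φ) ∧
    (¬ ∃ φ, A₁.IsAlgIso A₃ φ) ∧ (¬ ∃ φ, A₃.IsAlgIso A₁ φ) ∧
    (¬ ∃ φ, A₂.IsAlgIso A₃ φ) ∧ (¬ ∃ φ, A₃.IsAlgIso A₂ φ) := by
  have hT := card_quotient_eq hcard hL3
  have count := card_filter_AstarSets (exists_mk_eq_iff_pow_eq_one hp hp5 hcard hLU hL3 hU3p)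
  have one₁ := count (B1sets p (G ⧸ L)) 1
  have one₂ := count (B2sets p (G ⧸ L)) 1
  have one₃ := count (B3sets p (G ⧸ L)) 1
  have two₁ := count (B1sets p (G ⧸ L)) (2 * (p - 1))
  have two₂ := count (B2sets p (G ⧸ L)) (2 * (p - 1))
  have two₃ := count (B3sets p (G ⧸ L)) (2 * (p - 1))
  rw [← h₁] at one₁ two₁
  rw [← h₂] at one₂ two₂
  rw [← h₃] at one₃ two₃
  have := card_filter_B1sets_one_pos hp hp5 hT
  have := card_filter_B2sets_one hp hp5 hT
  have := card_filter_B3sets_one hp hp5 hT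
  have := card_filter_B1sets_two_mul hp hp5 hT
  have := card_filter_B2sets_two_mul_pos hp hp5 hT
  have := card_filter_B3sets_two_mul hp hp5 hT
  exact ⟨SRing.not_exists_isAlgIso_of_card_filter_ne (Nat.card L * 1) (by omega),
    SRing.not_exists_isAlgIso_of_card_filter_ne (Nat.card L * 1) (by omega),
    SRing.not_exists_isAlgIso_of_card_filter_ne (Nat.card L * 1) (by omega),
    SRing.not_exists_isAlgIso_of_card_filter_ne (Nat.card L * 1) (by omega),
    SRing.not_exists_isAlgIso_of_card_filter_ne (Nat.card L * (2 * (p - 1))) (by omega),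
    SRing.not_exists_isAlgIso_of_card_filter_ne (Nat.card L * (2 * (p - 1))) (by omega)⟩

/-- For `p ≥ 5` prime and `G` abelian of order `9p`, the S-rings `𝒜₁*`, `𝒜₂*`, `𝒜₃*`
over `G` are pairwise non algebraically isomorphic. -/
theorem stmt19 (p : ℕ) (hp : p.Prime) (hp5 : 5 ≤ p)
    (G : Type) [CommGroup G] [Fintype G] [DecidableEq G]
    (hcard : Fintype.card G = 9 * p)
    (U L : Subgroup G) (hLU : L ≤ U)
    (hL3 : Nat.card L = 3) (hU3p : Nat.card U = 3 * p) (hUcyc : IsCyclic ↥U)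
    [Fintype (G ⧸ L)] [DecidableEq (G ⧸ L)]
    (A₁ A₂ A₃ : SRing G)
    (h₁ : A₁.basicSets = AstarSets p G U L (B1sets p (G ⧸ L)))
    (h₂ : A₂.basicSets = AstarSets p G U L (B2sets p (G ⧸ L)))
    (h₃ : A₃.basicSets = AstarSets p G U L (B3sets p (G ⧸ L))) :
    (¬ ∃ φ, A₁.IsAlgIso A₂ φ) ∧ (¬ ∃ φ, A₂.IsAlgIso A₁ φ) ∧
    (¬ ∃ φ, A₁.IsAlgIso A₃ φ) ∧ (¬ ∃ φ, A₃.IsAlgIso A₁ φ) ∧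
    (¬ ∃ φ, A₂.IsAlgIso A₃ φ) ∧ (¬ ∃ φ, A₃.IsAlgIso A₂ φ) :=
  stmt19_general p hp hp5 G hcard U L hLU hL3 hU3p A₁ A₂ A₃ h₁ h₂ h₃
end
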